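/- A rational map R(z) = p(z)/q(z) of degree B ≠ 0 (with p, q coprime polynomials, max(deg p, deg q) = B) satisfying the base condition R(∞) = 1 is invariant under the one-parameter group of combined rotations z ↦ e^{iα}z and isorotations R ↦ (cos(β/2)R − i sin(β/2))/(−i sin(β/2)R + cos(β/2)) with β = Bα if and only if R(z) = (z^B − b)/(z^B + b) for some nonzero complex number b. -/
import Mathlib


open Polynomial Complex


lemma coeff_comp_C_mul_X (h : ℂ[X]) (e : ℂ) (k : ℕ) :
    (h.comp (C e * X)).coeff k = e ^ k * h.coeff k := by
  induction h using Polynomial.induction_on' with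
  | add f g hf hg => simp [add_comp, hf, hg, mul_add]
  | monomial n a =>
    have h1 : (C e * X) ^ n = C (e ^ n) * X ^ n := by rw [mul_pow, ← C_pow]
    rw [monomial_comp, h1, coeff_C_mul, coeff_C_mul, coeff_X_pow, coeff_monomial]
    rcases eq_or_ne n k with rfl | hk
    · simp; ring
    · simp [hk, Ne.symm hk]

lemma key_step (B : ℕ) (hB : B ≠ 0) (p q : ℂ[X])
    (hcop : IsCoprime p q) (hp : p.Monic) (hq : q.Monic)
    (hpd : p.natDegree = B) (hqd : q.natDegree = B) (α : ℝ)
    (hinv : ∀ z : ℂ, q.eval (exp (I * α) * z) ≠ 0 →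
        (-I * Real.sin (B * α / 2) *
            (p.eval (exp (I * α) * z) / q.eval (exp (I * α) * z)) +
          Real.cos (B * α / 2)) ≠ 0 →
        q.eval z ≠ 0 →
        (Real.cos (B * α / 2) * (p.eval (exp (I * α) * z) / q.eval (exp (I * α) * z)) -
            I * Real.sin (B * α / 2)) /
          (-I * Real.sin (B * α / 2) *
              (p.eval (exp (I * α) * z) / q.eval (exp (I * α) * z)) +
            Real.cos (B * α / 2)) =
          p.eval z / q.eval z) :
    (p + q).comp (C (exp (I * α)) * X) = C (exp (I * α) ^ B) * (p + q) ∧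
      (p - q).comp (C (exp (I * α)) * X) = p - q := by
  set e : ℂ := exp (I * α) with he
  have hene : e ≠ 0 := Complex.exp_ne_zero _
  set c : ℂ := (Real.cos (B * α / 2) : ℂ) with hc
  set s : ℂ := (Real.sin (B * α / 2) : ℂ) with hs
  -- exp facts
  have hcs : c + I * s = exp ((B * α / 2 : ℝ) * I) := by
    rw [Complex.exp_mul_I, hc, hs, Complex.ofReal_cos, Complex.ofReal_sin]; ring
  have hcs' : c - I * s = exp (-((B * α / 2 : ℝ) : ℂ) * I) := by
    rw [Complex.exp_mul_I, Complex.cos_neg, Complex.sin_neg, hc, hs,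
      Complex.ofReal_cos, Complex.ofReal_sin]
    ring
  have hone : (c + I * s) * (c - I * s) = 1 := by
    rw [hcs, hcs', ← Complex.exp_add,
      show ((B * α / 2 : ℝ) : ℂ) * I + -((B * α / 2 : ℝ) : ℂ) * I = 0 by ring,
      Complex.exp_zero]
  have hE : e ^ B = (c + I * s) ^ 2 := by
    rw [hcs, he, ← Complex.exp_nat_mul, sq, ← Complex.exp_add]
    congr 1
    push_cast
    ring
  have hkey : e ^ B * (c - I * s) = c + I * s := by
    rw [hE]; linear_combination (c + I * s) * hone
  have hcsne : c - I * s ≠ 0 := by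
    intro h0
    rw [h0, mul_zero] at hone
    exact one_ne_zero hone.symm
  have hcsne' : c + I * s ≠ 0 := by
    intro h0
    rw [h0, zero_mul] at hone
    exact one_ne_zero hone.symm
  -- polynomials
  set P : ℂ[X] := p.comp (C e * X) with hP
  set Q : ℂ[X] := q.comp (C e * X) with hQ
  set N : ℂ[X] := C c * P - C (I * s) * Q with hN
  set D : ℂ[X] := C (-(I * s)) * P + C c * Q with hD
  have hpB : p.coeff B = 1 := by rw [← hpd]; exact hp.coeff_natDegree
  have hqB : q.coeff B = 1 := by rw [← hqd]; exact hq.coeff_natDegree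
  have hPB : P.coeff B = e ^ B := by rw [hP, coeff_comp_C_mul_X, hpB, mul_one]
  have hQB : Q.coeff B = e ^ B := by rw [hQ, coeff_comp_C_mul_X, hqB, mul_one]
  have hNB : N.coeff B = e ^ B * (c - I * s) := by
    rw [hN, coeff_sub, coeff_C_mul, coeff_C_mul, hPB, hQB]; ring
  have hDB : D.coeff B = e ^ B * (c - I * s) := by
    rw [hD, coeff_add, coeff_C_mul, coeff_C_mul, hPB, hQB]; ring
  have hNBne : N.coeff B ≠ 0 := by rw [hNB]; exact mul_ne_zero (pow_ne_zero _ hene) hcsne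
  have hDBne : D.coeff B ≠ 0 := by rw [hDB]; exact mul_ne_zero (pow_ne_zero _ hene) hcsne
  have hNne : N ≠ 0 := fun h0 => hNBne (by rw [h0, coeff_zero])
  have hQne : Q ≠ 0 := fun h0 => (pow_ne_zero B hene) (by rw [← hQB, h0, coeff_zero])
  have hDne : D ≠ 0 := fun h0 => hDBne (by rw [h0, coeff_zero])
  have hqne : q ≠ 0 := hq.ne_zero
  -- evaluation facts
  have hPev : ∀ z : ℂ, P.eval z = p.eval (e * z) := by intro z; rw [hP, eval_comp]; simp
  have hQev : ∀ z : ℂ, Q.eval z = q.eval (e * z) := by intro z; rw [hQ, eval_comp]; simp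
  -- main polynomial identity
  have hmain : q * N = p * D := by
    have hsub : (q * N - p * D) = 0 := by
      apply eq_zero_of_infinite_isRoot
      apply Set.Infinite.mono (s := ({z | Q.eval z = 0} ∪ {z | D.eval z = 0} ∪ {z | q.eval z = 0})ᶜ)
      · intro z hz
        simp only [Set.mem_compl_iff, Set.mem_union, Set.mem_setOf_eq, not_or] at hz
        obtain ⟨⟨hz1, hz2⟩, hz3⟩ := hz
        have h1 : q.eval (e * z) ≠ 0 := by rw [← hQev]; exact hz1
        have hfac : -I * s * (p.eval (e * z) / q.eval (e * z)) + c =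
            D.eval z / q.eval (e * z) := by
          rw [hD]
          simp only [eval_add, eval_mul, eval_C, eval_neg]
          rw [hPev, hQev]
          field_simp
        have h2 : -I * s * (p.eval (e * z) / q.eval (e * z)) + c ≠ 0 := by
          rw [hfac]
          exact div_ne_zero hz2 h1
        have heq := hinv z h1 h2 hz3
        rw [div_eq_div_iff h2 hz3] at heq
        field_simp [h1] at heq
        show (q * N - p * D).IsRoot z
        simp only [IsRoot, eval_sub, eval_mul, hN, hD, eval_add, eval_C, eval_neg]
        rw [hPev, hQev]
        linear_combination heq
      · apply Set.Finite.infinite_compl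
        exact ((Q.finite_setOf_isRoot hQne).union (D.finite_setOf_isRoot hDne)).union
          (q.finite_setOf_isRoot hqne)
    exact sub_eq_zero.mp hsub
  -- divisibility: N = C (c + I*s) * p
  have hpne : p ≠ 0 := hp.ne_zero
  obtain ⟨u, hu⟩ : p ∣ N := hcop.dvd_of_dvd_mul_left ⟨D, hmain⟩
  have hune : u ≠ 0 := fun h0 => hNne (by rw [hu, h0, mul_zero])
  have hPdeg : P.natDegree = B := by
    rw [hP, natDegree_comp, natDegree_C_mul hene, natDegree_X, mul_one, hpd]
  have hQdeg : Q.natDegree = B := by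
    rw [hQ, natDegree_comp, natDegree_C_mul hene, natDegree_X, mul_one, hqd]
  have hNdeg : N.natDegree ≤ B := by
    calc N.natDegree ≤ max (C c * P).natDegree (C (I * s) * Q).natDegree :=
          natDegree_sub_le _ _
      _ ≤ max P.natDegree Q.natDegree :=
          max_le_max (natDegree_C_mul_le _ _) (natDegree_C_mul_le _ _)
      _ ≤ B := by rw [hPdeg, hQdeg]; simp
  have hudeg : u.natDegree = 0 := by
    have hh := Polynomial.natDegree_mul hpne hune
    rw [← hu, hpd] at hh
    omega
  have huC : u = C (u.coeff 0) := eq_C_of_natDegree_eq_zero hudeg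
  have hucoeff : u.coeff 0 = e ^ B * (c - I * s) := by
    have hh : N.coeff B = p.coeff B * u.coeff 0 := by
      rw [hu, huC, coeff_mul_C]; simp [coeff_C]
    rw [hNB, hpB, one_mul] at hh
    exact hh.symm
  have hNfinal : N = p * C (c + I * s) := by
    rw [hu, huC, hucoeff, hkey]
  have hDfinal : D = C (c + I * s) * q := by
    apply mul_left_cancel₀ hpne
    rw [← hmain, hNfinal]; ring
  -- C-arithmetic forms
  have h1 : C c * P - C (I * s) * Q = (C c + C (I * s)) * p := by
    rw [← hN, hNfinal, ← C_add]; ring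
  have h2 : -(C (I * s)) * P + C c * Q = (C c + C (I * s)) * q := by
    rw [← C_neg, ← hD, hDfinal, ← C_add]
  have hCkey : C (e ^ B) * (C c - C (I * s)) = C c + C (I * s) := by
    rw [← C_sub, ← C_mul, hkey, C_add]
  constructor
  · have hPQ : (C c - C (I * s)) * ((p + q).comp (C e * X)) =
        (C c - C (I * s)) * (C (e ^ B) * (p + q)) := by
      rw [add_comp, ← hP, ← hQ]
      linear_combination h1 + h2 - (p + q) * hCkey
    have hCne : (C c - C (I * s) : ℂ[X]) ≠ 0 := by
      rw [← C_sub]; exact C_ne_zero.mpr hcsne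
    exact mul_left_cancel₀ hCne hPQ
  · have hPQ : (C c + C (I * s)) * ((p - q).comp (C e * X)) =
        (C c + C (I * s)) * (p - q) := by
      rw [sub_comp, ← hP, ← hQ]
      linear_combination h1 - h2
    have hCne : (C c + C (I * s) : ℂ[X]) ≠ 0 := by
      rw [← C_add]; exact C_ne_zero.mpr hcsne'
    exact mul_left_cancel₀ hCne hPQ

lemma exp_pow_pi_div (k : ℕ) (hk : k ≠ 0) :
    Complex.exp (I * ((Real.pi / k : ℝ) : ℂ)) ^ k = -1 := by
  rw [← Complex.exp_nat_mul, show (k : ℂ) * (I * ((Real.pi / k : ℝ) : ℂ)) =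
      (Real.pi : ℂ) * I from ?_]
  · exact Complex.exp_pi_mul_I
  · have hk' : (k : ℂ) ≠ 0 := Nat.cast_ne_zero.mpr hk
    push_cast
    field_simp


/-- A rational map `R = p/q` of degree `B ≠ 0` (with `p`, `q` coprime and, by the base
condition `R(∞) = 1`, both monic of degree `B`) is invariant under the one-parameter
family of combined rotations `z ↦ e^{iα} z` and isorotations
`R ↦ (cos(β/2) R − i sin(β/2)) / (−i sin(β/2) R + cos(β/2))` with `β = Bα`
if and only if `R(z) = (z^B − b)/(z^B + b)` for some nonzero `b ∈ ℂ`. -/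
theorem axially_symmetric_rational_map (B : ℕ) (hB : B ≠ 0) (p q : ℂ[X])
    (hcop : IsCoprime p q) (hp : p.Monic) (hq : q.Monic)
    (hpd : p.natDegree = B) (hqd : q.natDegree = B) :
    (∀ α : ℝ, ∀ z : ℂ, q.eval (exp (I * α) * z) ≠ 0 →
        (-I * Real.sin (B * α / 2) *
            (p.eval (exp (I * α) * z) / q.eval (exp (I * α) * z)) +
          Real.cos (B * α / 2)) ≠ 0 →
        q.eval z ≠ 0 →
        (Real.cos (B * α / 2) * (p.eval (exp (I * α) * z) / q.eval (exp (I * α) * z)) -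
            I * Real.sin (B * α / 2)) /
          (-I * Real.sin (B * α / 2) *
              (p.eval (exp (I * α) * z) / q.eval (exp (I * α) * z)) +
            Real.cos (B * α / 2)) =
          p.eval z / q.eval z)
    ↔ ∃ b : ℂ, b ≠ 0 ∧ p = X ^ B - C b ∧ q = X ^ B + C b := by
  have hpB : p.coeff B = 1 := by rw [← hpd]; exact hp.coeff_natDegree
  have hqB : q.coeff B = 1 := by rw [← hqd]; exact hq.coeff_natDegree
  constructor
  · intro hinv
    have key := fun α : ℝ => key_step B hB p q hcop hp hq hpd hqd α (hinv α)
    have hFco : ∀ (α : ℝ) (k : ℕ), exp (I * α) ^ k * (p + q).coeff k =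
        exp (I * α) ^ B * (p + q).coeff k := by
      intro α k
      have h := congrArg (fun f => Polynomial.coeff f k) (key α).1
      simpa only [coeff_comp_C_mul_X, coeff_C_mul] using h
    have hGco : ∀ (α : ℝ) (k : ℕ), exp (I * α) ^ k * (p - q).coeff k =
        (p - q).coeff k := by
      intro α k
      have h := congrArg (fun f => Polynomial.coeff f k) (key α).2
      simpa only [coeff_comp_C_mul_X] using h
    have hG : ∀ k, k ≠ 0 → (p - q).coeff k = 0 := by
      intro k hk
      have h := hGco (Real.pi / k) k
      rw [exp_pow_pi_div k hk] at h
      have h2 : (2 : ℂ) * (p - q).coeff k = 0 := by linear_combination -h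
      simpa using h2
    have hF0 : ∀ k, k ≠ B → (p + q).coeff k = 0 := by
      intro k hk
      rcases lt_or_gt_of_ne hk with hlt | hgt
      · set m := B - k with hm
        have hm0 : m ≠ 0 := by omega
        have hkm : k + m = B := by omega
        have h := hFco (Real.pi / m) k
        rw [← hkm, pow_add, exp_pow_pi_div m hm0] at h
        have hne : exp (I * ((Real.pi / m : ℝ) : ℂ)) ^ k ≠ 0 :=
          pow_ne_zero _ (Complex.exp_ne_zero _)
        have h2 : (2 : ℂ) * (p + q).coeff k = 0 := by
          apply mul_left_cancel₀ hne
          rw [mul_zero]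
          linear_combination h
        simpa using h2
      · apply coeff_eq_zero_of_natDegree_lt
        calc (p + q).natDegree ≤ max p.natDegree q.natDegree := natDegree_add_le _ _
          _ ≤ B := by rw [hpd, hqd]; simp
          _ < k := hgt
    set g0 : ℂ := (p - q).coeff 0 with hg0
    have hb : (-g0 / 2 : ℂ) ≠ 0 := by
      intro h0
      have hg00 : g0 = 0 := by
        field_simp at h0
        simpa using h0
      have hpq : p = q := by
        rw [← sub_eq_zero]
        ext n
        rcases eq_or_ne n 0 with rfl | hn
        · simp only [coeff_zero]
          rw [← hg0]
          exact hg00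
        · simp [hG n hn]
      rw [hpq] at hcop
      have := natDegree_eq_zero_of_isUnit (isCoprime_self.mp hcop)
      rw [hqd] at this
      exact hB this
    refine ⟨-g0 / 2, hb, ?_, ?_⟩
    · ext n
      rcases eq_or_ne n B with rfl | hn
      · simp [coeff_X_pow, coeff_C, hB, hpB]
      · have h1 := hF0 n hn
        rcases eq_or_ne n 0 with rfl | hn0
        · rw [coeff_sub, coeff_X_pow, coeff_C, if_neg hn, if_pos rfl]
          have h2 : p.coeff 0 - q.coeff 0 = g0 := by rw [hg0]; simp
          have h3 : p.coeff 0 + q.coeff 0 = 0 := by rw [← coeff_add]; exact h1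
          linear_combination (h2 + h3) / 2
        · have h2 : p.coeff n - q.coeff n = 0 := by
            rw [← coeff_sub]; exact hG n hn0
          have h3 : p.coeff n + q.coeff n = 0 := by rw [← coeff_add]; exact h1
          rw [coeff_sub, coeff_X_pow, coeff_C, if_neg hn, if_neg hn0]
          linear_combination (h2 + h3) / 2
    · ext n
      rcases eq_or_ne n B with rfl | hn
      · simp [coeff_X_pow, coeff_C, hB, hqB]
      · have h1 := hF0 n hn
        rcases eq_or_ne n 0 with rfl | hn0
        · rw [coeff_add, coeff_X_pow, coeff_C, if_neg hn, if_pos rfl]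
          have h2 : p.coeff 0 - q.coeff 0 = g0 := by rw [hg0]; simp
          have h3 : p.coeff 0 + q.coeff 0 = 0 := by rw [← coeff_add]; exact h1
          linear_combination (h3 - h2) / 2
        · have h2 : p.coeff n - q.coeff n = 0 := by
            rw [← coeff_sub]; exact hG n hn0
          have h3 : p.coeff n + q.coeff n = 0 := by rw [← coeff_add]; exact h1
          rw [coeff_add, coeff_X_pow, coeff_C, if_neg hn, if_neg hn0]
          linear_combination (h3 - h2) / 2
  · rintro ⟨b, hb, rfl, rfl⟩
    intro α z h1 h2 h3
    simp only [eval_sub, eval_add, eval_pow, eval_X, eval_C, mul_pow] at h1 h2 h3 ⊢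
    set c : ℂ := ((Real.cos (B * α / 2) : ℝ) : ℂ) with hc
    set s : ℂ := ((Real.sin (B * α / 2) : ℝ) : ℂ) with hs
    set K : ℂ := exp (I * α) ^ B with hK
    set t : ℂ := z ^ B with ht
    have hcs : c + s * I = exp ((B * α / 2 : ℝ) * I) := by
      rw [Complex.exp_mul_I, hc, hs, Complex.ofReal_cos, Complex.ofReal_sin]
    have hcs' : c - s * I = exp (-((B * α / 2 : ℝ) : ℂ) * I) := by
      rw [Complex.exp_mul_I, Complex.cos_neg, Complex.sin_neg, hc, hs,
        Complex.ofReal_cos, Complex.ofReal_sin]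
      ring
    have hone : (c + s * I) * (c - s * I) = 1 := by
      rw [hcs, hcs', ← Complex.exp_add,
        show ((B * α / 2 : ℝ) : ℂ) * I + -((B * α / 2 : ℝ) : ℂ) * I = 0 by ring,
        Complex.exp_zero]
    have hE : K = (c + s * I) ^ 2 := by
      rw [hcs, hK, ← Complex.exp_nat_mul, sq, ← Complex.exp_add]
      congr 1
      push_cast
      ring
    have hkey : K * (c - s * I) = c + s * I := by
      rw [hE]; linear_combination (c + s * I) * hone
    have h2' : -I * s * (K * t - b) + c * (K * t + b) ≠ 0 := by
      have heq : -I * s * (K * t - b) + c * (K * t + b) =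
          (-I * s * ((K * t - b) / (K * t + b)) + c) * (K * t + b) := by
        field_simp
      rw [heq]
      exact mul_ne_zero h2 h1
    rw [div_eq_div_iff h2 h3]
    have e1 : c * ((K * t - b) / (K * t + b)) - I * s =
        (c * (K * t - b) - I * s * (K * t + b)) / (K * t + b) := by
      field_simp
    have e2 : -I * s * ((K * t - b) / (K * t + b)) + c =
        (-I * s * (K * t - b) + c * (K * t + b)) / (K * t + b) := by
      field_simp
    rw [e1, e2]
    field_simp
    linear_combination (2 * b * t) * hkey
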